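/- Let φᵢⱼ = φⱼᵢ : ℝ³ → ℝ (1 ≤ i,j ≤ 3) be arbitrary smooth functions, and let g be the metric on ℝ⁶ given by g = 2du₁⊗du₄ + 2du₂⊗du₅ + 2du₃⊗du₆ + 2φ₁₂ du₁⊗du₂ + 2φ₁₃ du₁⊗du₃ + 2φ₂₃ du₂⊗du₃ + (φ₁₁ − 2u₁u₃u₅) du₁⊗du₁ + φ₂₂ du₂⊗du₂ + (φ₃₃ − 2(u₁+u₃)u₅) du₃⊗du₃, where the φᵢⱼ are evaluated at (u₁,u₂,u₃). Then at every point of ℝ⁶ and for every tangent vector X ∈ ℝ⁶, the characteristic polynomial of the Szabó operator S(X) : Y ↦ (∇_X R)(Y,X)X of the Levi-Civita connection of g equals λ⁶; that is, g is a pseudo-Riemannian Szabó metric of signature (3,3) with only zero eigenvalues. -/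

import Mathlib

open scoped BigOperators

noncomputable section

variable {ι : Type} [Fintype ι] [DecidableEq ι]

/-- Partial derivative in the `i`-th coordinate direction. -/
def pd (i : ι) (f : (ι → ℝ) → ℝ) : (ι → ℝ) → ℝ :=
  fun p => fderiv ℝ f p (Pi.single i 1)

/-- Curvature components `R^l_{ijk}` of the torsion-free connection with Christoffel
symbols `Γ k i j = Γᵏᵢⱼ`:
`Rˡᵢⱼₖ = ∂ᵢΓˡⱼₖ − ∂ⱼΓˡᵢₖ + Σₘ (Γˡᵢₘ Γᵐⱼₖ − Γˡⱼₘ Γᵐᵢₖ)`. -/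
def curv (Γ : ι → ι → ι → (ι → ℝ) → ℝ) (l i j k : ι) : (ι → ℝ) → ℝ :=
  fun p => pd i (Γ l j k) p - pd j (Γ l i k) p +
    ∑ m, (Γ l i m p * Γ m j k p - Γ l j m p * Γ m i k p)

/-- Components `(∇ₕR)ˡᵢⱼₖ` of the covariant derivative of the curvature. -/
def covR (Γ : ι → ι → ι → (ι → ℝ) → ℝ) (h l i j k : ι) : (ι → ℝ) → ℝ :=
  fun p => pd h (curv Γ l i j k) p +
    ∑ m, (Γ l h m p * curv Γ m i j k p - Γ m h i p * curv Γ l m j k p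
      - Γ m h j p * curv Γ l i m k p - Γ m h k p * curv Γ l i j m p)

/-- The Szabó operator `S(X) : Y ↦ (∇_X R)(Y,X)X` at the point `p`, as a matrix:
`(S(X)Y)ˡ = Σ_{h,i,j,k} Xʰ Yⁱ Xʲ Xᵏ (∇ₕR)ˡᵢⱼₖ`. -/
def szabo (Γ : ι → ι → ι → (ι → ℝ) → ℝ) (p X : ι → ℝ) : Matrix ι ι ℝ :=
  Matrix.of fun l i => ∑ h, ∑ j, ∑ k, X h * X j * X k * covR Γ h l i j k p

/-- Ricci tensor `Ricⱼₖ = Σᵢ Rⁱᵢⱼₖ`. -/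
def ricci (Γ : ι → ι → ι → (ι → ℝ) → ℝ) (j k : ι) : (ι → ℝ) → ℝ :=
  fun p => ∑ i, curv Γ i i j k p

/-- Covariant derivative of the Ricci tensor,
`(∇ᵢRic)ⱼₖ = ∂ᵢRicⱼₖ − Σₘ (Γᵐᵢⱼ Ricₘₖ + Γᵐᵢₖ Ricⱼₘ)`. -/
def covRic (Γ : ι → ι → ι → (ι → ℝ) → ℝ) (i j k : ι) : (ι → ℝ) → ℝ :=
  fun p => pd i (ricci Γ j k) p -
    ∑ m, (Γ m i j p * ricci Γ m k p + Γ m i k p * ricci Γ j m p)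

/-- The Ricci tensor is cyclic parallel at `p`. -/
def CyclicParallelAt (Γ : ι → ι → ι → (ι → ℝ) → ℝ) (p : ι → ℝ) : Prop :=
  ∀ i j k, covRic Γ i j k p + covRic Γ j k i p + covRic Γ k i j p = 0

/-- Christoffel symbols `Γ̃ᶜₐᵦ = ½ Σ_d g̃ᶜᵈ (∂ₐ g̃ᵦ_d + ∂ᵦ g̃ₐ_d − ∂_d g̃ₐᵦ)` of the
Levi-Civita connection of a pseudo-Riemannian metric `g`. -/
def christoffel (g : (ι → ℝ) → Matrix ι ι ℝ) (c a b : ι) : (ι → ℝ) → ℝ :=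
  fun p => (1 / 2) * ∑ d, (g p)⁻¹ c d *
    (pd a (fun q => g q b d) p + pd b (fun q => g q a d) p - pd d (fun q => g q a b) p)

end

/-- The twisted Riemannian extension metric on `ℝ⁶` of the connection with `Γ²₁₁ = u₁u₃`,
`Γ²₃₃ = u₁+u₃`, twisted by a symmetric tensor `φ` (evaluated at `(u₁,u₂,u₃)`):
`g = 2du₁⊗du₄ + 2du₂⊗du₅ + 2du₃⊗du₆ + 2φ₁₂ du₁⊗du₂ + 2φ₁₃ du₁⊗du₃ + 2φ₂₃ du₂⊗du₃
  + (φ₁₁ − 2u₁u₃u₅) du₁⊗du₁ + φ₂₂ du₂⊗du₂ + (φ₃₃ − 2(u₁+u₃)u₅) du₃⊗du₃`. -/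
def gSixTwist (φ : Fin 3 → Fin 3 → (Fin 3 → ℝ) → ℝ) :
    (Fin 6 → ℝ) → Matrix (Fin 6) (Fin 6) ℝ :=
  fun u =>
    !![φ 0 0 ![u 0, u 1, u 2] - 2 * u 0 * u 2 * u 4,
         φ 0 1 ![u 0, u 1, u 2], φ 0 2 ![u 0, u 1, u 2], 1, 0, 0;
       φ 0 1 ![u 0, u 1, u 2], φ 1 1 ![u 0, u 1, u 2], φ 1 2 ![u 0, u 1, u 2], 0, 1, 0;
       φ 0 2 ![u 0, u 1, u 2], φ 1 2 ![u 0, u 1, u 2],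
         φ 2 2 ![u 0, u 1, u 2] - 2 * (u 0 + u 2) * u 4, 0, 0, 1;
       1, 0, 0, 0, 0, 0;
       0, 1, 0, 0, 0, 0;
       0, 0, 1, 0, 0, 0]

/-! Indices below are those of `Fin 6`, i.e. the paper's shifted down by one. The metric does
not depend on `u 3, u 5`, and the rows `3, 5` of `g` are constant, so `∂₃, ∂₅` are parallel;
their duals `du₀, du₂` are parallel too, i.e. `Γ⁰ = Γ² = 0`. The symbols `Γ¹ₐᵦ` are those of the
base connection, which vanish unless `a, b ∈ {0, 2}` and depend only on `u 0, u 2`. Since `g` is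
affine in `u 4`, `Γ⁴` does not depend on `u 4` and `Γ⁴₄ᵦ = 0`. These facts kill
`(∇ₕR)ˡᵢⱼₖ` for `l ∈ {0, 2}`, for `i ∈ {3, 5}`, for `l = 1, i ∉ {0, 2}` and for `l = i = 4`, so
`S(X)` lowers the weight `(3, 2, 3, 0, 1, 0)` strictly and is nilpotent. -/

section Calculus

variable {ι : Type} [DecidableEq ι]

theorem pd_zero (i : ι) (p : ι → ℝ) : pd i 0 p = 0 := by
  simp [pd]

theorem pd_const (i : ι) (c : ℝ) (p : ι → ℝ) : pd i (fun _ => c) p = 0 := by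
  simp [pd]

theorem pd_apply (i j : ι) (p : ι → ℝ) : pd i (fun u => u j) p = (Pi.single i 1 : ι → ℝ) j := by
  rw [pd, show (fun u : ι → ℝ => u j) = ContinuousLinearMap.proj (R := ℝ) j from rfl,
    ContinuousLinearMap.fderiv]
  rfl

def IsInvariantAlong {β : Type*} (v : ι → ℝ) (f : (ι → ℝ) → β) : Prop :=
  ∀ u (t : ℝ), f (u + t • v) = f u

variable [Fintype ι]

theorem pd_sub (i : ι) {f g : (ι → ℝ) → ℝ} {p : ι → ℝ}
    (hf : DifferentiableAt ℝ f p) (hg : DifferentiableAt ℝ g p) :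
    pd i (fun u => f u - g u) p = pd i f p - pd i g p := by
  simp [pd, fderiv_fun_sub hf hg]

theorem pd_mul (i : ι) {f g : (ι → ℝ) → ℝ} {p : ι → ℝ}
    (hf : DifferentiableAt ℝ f p) (hg : DifferentiableAt ℝ g p) :
    pd i (fun u => f u * g u) p = pd i f p * g p + f p * pd i g p := by
  simp [pd, fderiv_fun_mul hf hg]
  ring

theorem pd_eq_zero_of_isInvariantAlong {i : ι} {f : (ι → ℝ) → ℝ}
    (hf : IsInvariantAlong (Pi.single i 1) f) (p : ι → ℝ) : pd i f p = 0 := by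
  by_cases hd : DifferentiableAt ℝ f p
  · rw [pd, ← hd.lineDeriv_eq_fderiv, lineDeriv]
    simp [hf p]
  · simp [pd, fderiv_zero_of_not_differentiableAt hd]

theorem IsInvariantAlong.pd {v : ι → ℝ} {f : (ι → ℝ) → ℝ} (hf : IsInvariantAlong v f) (i : ι) :
    IsInvariantAlong v (pd i f) := by
  intro u t
  have hshift : (fun x => f (x + t • v)) = f := funext fun x => hf x t
  simp only [_root_.pd]
  rw [← fderiv_comp_add_right, hshift]

theorem IsInvariantAlong.christoffel {v : ι → ℝ} {g : (ι → ℝ) → Matrix ι ι ℝ}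
    (hg : IsInvariantAlong v g) (c a b : ι) : IsInvariantAlong v (christoffel g c a b) := by
  have hentry : ∀ a b, IsInvariantAlong v (fun q => g q a b) := fun a b u t => by
    simp only [hg u t]
  intro u t
  simp only [_root_.christoffel, hg u t, (hentry _ _).pd _ u t]

end Calculus

section Christoffel

variable {ι : Type} [Fintype ι] [DecidableEq ι] {g : (ι → ℝ) → Matrix ι ι ℝ}

theorem christoffel_comm (hsymm : ∀ u a b, g u a b = g u b a) (c a b : ι) :
    christoffel g c a b = christoffel g c b a := by
  funext p
  simp only [christoffel, hsymm _ a b]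
  congr 1
  exact Finset.sum_congr rfl fun d _ => by ring

theorem christoffel_eq_sum_of_row_const {a : ι} (hrow : ∀ d u, g u a d = g 0 a d)
    (c b : ι) (p : ι → ℝ) :
    christoffel g c a b p = 1 / 2 * ∑ d, (g p)⁻¹ c d * pd a (fun q => g q b d) p := by
  simp only [christoffel, hrow, pd_const, add_zero, sub_zero]

theorem christoffel_eq_zero_of_parallel {a : ι} (hrow : ∀ d u, g u a d = g 0 a d)
    (hinv : IsInvariantAlong (Pi.single a 1) g) (c b : ι) : christoffel g c a b = 0 := by
  have hentry : ∀ b d, IsInvariantAlong (Pi.single a 1) (fun q => g q b d) := fun b d u t => by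
    simp only [hinv u t]
  funext p
  simp [christoffel_eq_sum_of_row_const hrow, pd_eq_zero_of_isInvariantAlong (hentry _ _)]

theorem christoffel_eq_of_inv_row {c a' : ι} {p : ι → ℝ} (hsymm : ∀ u a b, g u a b = g u b a)
    (hrow : ∀ d u, g u a' d = g 0 a' d) (hinv : (g p)⁻¹ c = Pi.single a' 1) (a b : ι) :
    christoffel g c a b p = -(1 / 2) * pd a' (fun q => g q a b) p := by
  simp only [christoffel, hinv, Pi.single_apply, ite_mul, one_mul, zero_mul,
    Finset.sum_ite_eq', Finset.mem_univ, if_true, hsymm _ _ a', hrow, pd_const]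
  ring

end Christoffel

section Curvature

variable {ι : Type} [Fintype ι] [DecidableEq ι] {Γ : ι → ι → ι → (ι → ℝ) → ℝ}

theorem curv_eq_zero_of {l i : ι} (hrow : ∀ m, Γ l i m = 0) (hpd : ∀ j k p, pd i (Γ l j k) p = 0)
    (hprod : ∀ j m k p, Γ l j m p * Γ m i k p = 0) (j k : ι) : curv Γ l i j k = 0 := by
  funext p
  simp [curv, hrow, hpd, hprod, pd_zero]

theorem covR_eq_zero_of {l i : ι} {p : ι → ℝ} (hcurv : ∀ j k, curv Γ l i j k = 0)
    (hl : ∀ h m, Γ l h m p = 0 ∨ ∀ j k, curv Γ m i j k = 0)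
    (hi : ∀ h m, Γ m h i p = 0 ∨ ∀ j k, curv Γ l m j k = 0) (h j k : ι) :
    covR Γ h l i j k p = 0 := by
  have hterm : ∀ m, Γ l h m p * curv Γ m i j k p - Γ m h i p * curv Γ l m j k p = 0 := by
    intro m
    rcases hl h m with h1 | h1 <;> rcases hi h m with h2 | h2 <;> simp [h1, h2]
  simp [covR, hcurv, pd_zero, hterm]

theorem curv_eq_zero_of_row_eq_zero {l : ι} (hl : ∀ a b, Γ l a b = 0) (i j k : ι) :
    curv Γ l i j k = 0 :=
  curv_eq_zero_of (fun m => hl i m) (by simp [hl, pd_zero]) (by simp [hl]) j k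

theorem covR_eq_zero_of_row_eq_zero {l : ι} (hl : ∀ a b, Γ l a b = 0) (h i j k : ι) (p : ι → ℝ) :
    covR Γ h l i j k p = 0 :=
  covR_eq_zero_of (curv_eq_zero_of_row_eq_zero hl i) (fun h m => .inl (by simp [hl]))
    (fun h m => .inr (curv_eq_zero_of_row_eq_zero hl m)) h j k

theorem curv_eq_zero_of_parallel {i : ι} (hleft : ∀ c b, Γ c i b = 0)
    (hpd : ∀ c a b p, pd i (Γ c a b) p = 0) (l j k : ι) : curv Γ l i j k = 0 :=
  curv_eq_zero_of (hleft l) (hpd l) (by simp [hleft]) j k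

theorem covR_eq_zero_of_parallel {i : ι} (hleft : ∀ c b, Γ c i b = 0) (hright : ∀ c a, Γ c a i = 0)
    (hpd : ∀ c a b p, pd i (Γ c a b) p = 0) (h l j k : ι) (p : ι → ℝ) :
    covR Γ h l i j k p = 0 :=
  covR_eq_zero_of (curv_eq_zero_of_parallel hleft hpd l)
    (fun h m => .inr (curv_eq_zero_of_parallel hleft hpd m)) (fun h m => .inl (by simp [hright]))
    h j k

theorem curv_eq_zero_of_supported (N : ι → Prop) {l i : ι} (hN : ∀ n, N n → ∀ a b, Γ n a b = 0)
    (hsupp : ∀ a b, ¬ N a → Γ l a b = 0 ∧ Γ l b a = 0)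
    (hpd : ∀ m, ¬ N m → ∀ a b p, pd m (Γ l a b) p = 0) (hi : ¬ N i) (j k : ι) :
    curv Γ l i j k = 0 := by
  refine curv_eq_zero_of (fun m => (hsupp i m hi).1) (hpd i hi) (fun j m k p => ?_) j k
  by_cases hm : N m
  · simp [hN m hm]
  · simp [(hsupp m j hm).2]

theorem covR_eq_zero_of_supported (N : ι → Prop) {l i : ι} (hN : ∀ n, N n → ∀ a b, Γ n a b = 0)
    (hsupp : ∀ a b, ¬ N a → Γ l a b = 0 ∧ Γ l b a = 0)
    (hpd : ∀ m, ¬ N m → ∀ a b p, pd m (Γ l a b) p = 0) (hi : ¬ N i) (h j k : ι) (p : ι → ℝ) :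
    covR Γ h l i j k p = 0 := by
  have hcurv : ∀ {i}, ¬ N i → ∀ j k, curv Γ l i j k = 0 :=
    fun hi => curv_eq_zero_of_supported N hN hsupp hpd hi
  refine covR_eq_zero_of (hcurv hi) (fun h m => ?_) (fun h m => ?_) h j k
  · by_cases hm : N m
    · exact .inr (curv_eq_zero_of_row_eq_zero (hN m hm) i)
    · exact .inl (by simp [(hsupp m h hm).2])
  · by_cases hm : N m
    · exact .inl (by simp [hN m hm])
    · exact .inr (hcurv hm)

theorem szabo_apply_eq_zero_of {l i : ι} {p : ι → ℝ} (h : ∀ h j k, covR Γ h l i j k p = 0)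
    (X : ι → ℝ) : szabo Γ p X l i = 0 := by
  simp [szabo, h]

end Curvature

open Polynomial in
theorem Matrix.charpoly_eq_X_pow_of_strictlyBlockTriangular {n R α : Type*} [Fintype n]
    [DecidableEq n] [CommRing R] [LinearOrder α] {M : Matrix n n R} (b : n → α)
    (h : ∀ i j, b j ≤ b i → M i j = 0) : M.charpoly = X ^ Fintype.card n := by
  have htri : M.BlockTriangular b := fun i j hij => h i j hij.le
  have hblock : ∀ a, M.toSquareBlock b a = 0 := by
    intro a
    ext ⟨i, hi⟩ ⟨j, hj⟩
    exact h i j (by rw [hi, hj])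
  rw [htri.charpoly]
  simp_rw [hblock, charpoly_zero, Fintype.card_subtype]
  rw [Finset.prod_pow_eq_pow_sum, ← Finset.card_eq_sum_card_image, Finset.card_univ]

def twistMetric (φ : Fin 3 → Fin 3 → (Fin 3 → ℝ) → ℝ) (x : Fin 3 → ℝ) :
    Matrix (Fin 6) (Fin 6) ℝ :=
  !![φ 0 0 x, φ 0 1 x, φ 0 2 x, 1, 0, 0;
     φ 0 1 x, φ 1 1 x, φ 1 2 x, 0, 1, 0;
     φ 0 2 x, φ 1 2 x, φ 2 2 x, 0, 0, 1;
     1, 0, 0, 0, 0, 0;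
     0, 1, 0, 0, 0, 0;
     0, 0, 1, 0, 0, 0]

/-- The symbols `Γ²ₐᵦ` of the base connection (paper indexing), extended by zero to all of
`Fin 6`. -/
def baseGamma (a b : Fin 6) (u : Fin 6 → ℝ) : ℝ :=
  if a = 0 ∧ b = 0 then u 0 * u 2 else if a = 2 ∧ b = 2 then u 0 + u 2 else 0

section Base

theorem baseGamma_comm (a b : Fin 6) : baseGamma a b = baseGamma b a := by
  funext u
  unfold baseGamma
  split_ifs <;> simp_all

theorem baseGamma_eq_zero_of_left {a : Fin 6} (ha0 : a ≠ 0) (ha2 : a ≠ 2) (b : Fin 6) :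
    baseGamma a b = 0 := by
  funext u
  simp [baseGamma, ha0, ha2]

theorem isInvariantAlong_baseGamma (a b : Fin 6) {k : Fin 6} (hk0 : k ≠ 0) (hk2 : k ≠ 2) :
    IsInvariantAlong (Pi.single k 1) (baseGamma a b) := by
  intro u t
  simp [baseGamma, hk0.symm, hk2.symm]

theorem differentiable_baseGamma (a b : Fin 6) : Differentiable ℝ (baseGamma a b) := by
  unfold baseGamma
  split_ifs <;> fun_prop

theorem base_add_smul_single {k : Fin 6} (hk : k = 3 ∨ k = 4 ∨ k = 5) (u : Fin 6 → ℝ) (t : ℝ) :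
    ![(u + t • Pi.single k 1 : Fin 6 → ℝ) 0, (u + t • Pi.single k 1 : Fin 6 → ℝ) 1,
      (u + t • Pi.single k 1 : Fin 6 → ℝ) 2] = ![u 0, u 1, u 2] := by
  rcases hk with rfl | rfl | rfl <;> simp

theorem isInvariantAlong_comp_base {β : Type*} (F : (Fin 3 → ℝ) → β) {k : Fin 6}
    (hk : k = 3 ∨ k = 4 ∨ k = 5) :
    IsInvariantAlong (Pi.single k 1) (fun u => F ![u 0, u 1, u 2]) := fun u t => by
  simp only [base_add_smul_single hk]

end Base

section Metric

variable (φ : Fin 3 → Fin 3 → (Fin 3 → ℝ) → ℝ)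

theorem gSixTwist_apply (u : Fin 6 → ℝ) (a b : Fin 6) :
    gSixTwist φ u a b = twistMetric φ ![u 0, u 1, u 2] a b - 2 * u 4 * baseGamma a b u := by
  fin_cases a <;> fin_cases b <;> simp [gSixTwist, twistMetric, baseGamma] <;> ring

theorem gSixTwist_comm (u : Fin 6 → ℝ) (a b : Fin 6) :
    gSixTwist φ u a b = gSixTwist φ u b a := by
  fin_cases a <;> fin_cases b <;> rfl

theorem gSixTwist_fibre_row {a : Fin 6} (ha : a = 3 ∨ a = 4 ∨ a = 5) (d : Fin 6)
    (u : Fin 6 → ℝ) : gSixTwist φ u a d = gSixTwist φ 0 a d := by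
  rcases ha with rfl | rfl | rfl <;> fin_cases d <;> simp [gSixTwist]

theorem inv_gSixTwist (u : Fin 6 → ℝ) :
    (gSixTwist φ u)⁻¹ =
      !![0, 0, 0, 1, 0, 0;
         0, 0, 0, 0, 1, 0;
         0, 0, 0, 0, 0, 1;
         1, 0, 0, -gSixTwist φ u 0 0, -gSixTwist φ u 0 1, -gSixTwist φ u 0 2;
         0, 1, 0, -gSixTwist φ u 1 0, -gSixTwist φ u 1 1, -gSixTwist φ u 1 2;
         0, 0, 1, -gSixTwist φ u 2 0, -gSixTwist φ u 2 1, -gSixTwist φ u 2 2] := by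
  refine Matrix.inv_eq_right_inv ?_
  ext i j
  fin_cases i <;> fin_cases j <;> simp [gSixTwist, Matrix.mul_apply, Fin.sum_univ_six]

variable {φ}

theorem inv_gSixTwist_base_row (u : Fin 6 → ℝ) {c : Fin 6} (hc : c = 0 ∨ c = 1 ∨ c = 2) :
    (gSixTwist φ u)⁻¹ c = Pi.single (c + 3) 1 := by
  rw [inv_gSixTwist]
  ext d
  rcases hc with rfl | rfl | rfl <;> fin_cases d <;> simp

theorem inv_gSixTwist_four (u : Fin 6 → ℝ) :
    (gSixTwist φ u)⁻¹ 4 =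
      ![0, 1, 0, -gSixTwist φ u 1 0, -gSixTwist φ u 1 1, -gSixTwist φ u 1 2] := by
  rw [inv_gSixTwist]
  ext d
  fin_cases d <;> simp

theorem isInvariantAlong_gSixTwist {k : Fin 6} (hk : k = 3 ∨ k = 5) :
    IsInvariantAlong (Pi.single k 1) (gSixTwist φ) := by
  have hk0 : k ≠ 0 := by rcases hk with rfl | rfl <;> decide
  have hk2 : k ≠ 2 := by rcases hk with rfl | rfl <;> decide
  have hk4 : k ≠ 4 := by rcases hk with rfl | rfl <;> decide
  intro u t
  ext a b
  rw [gSixTwist_apply, gSixTwist_apply, base_add_smul_single (by tauto),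
    isInvariantAlong_baseGamma a b hk0 hk2 u t]
  simp [hk4.symm]

theorem isInvariantAlong_four_gSixTwist_apply {b d : Fin 6} (hd0 : d ≠ 0) (hd2 : d ≠ 2) :
    IsInvariantAlong (Pi.single 4 1) (fun q => gSixTwist φ q b d) := by
  intro u t
  simp only [gSixTwist_apply, baseGamma_comm b d, baseGamma_eq_zero_of_left hd0 hd2,
    base_add_smul_single (k := 4) (by decide), Pi.zero_apply, mul_zero]

theorem differentiable_twistMetric_comp_base (hφ : ∀ i j, Differentiable ℝ (φ i j))
    (a b : Fin 6) : Differentiable ℝ (fun u : Fin 6 → ℝ => twistMetric φ ![u 0, u 1, u 2] a b) := by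
  have hbase : Differentiable ℝ (fun u : Fin 6 → ℝ => ![u 0, u 1, u 2]) := by
    rw [differentiable_pi]
    intro i
    fin_cases i <;> simp <;> fun_prop
  fin_cases a <;> fin_cases b <;> simp [twistMetric] <;> first
    | exact differentiable_const _
    | exact (hφ _ _).comp hbase

theorem pd_gSixTwist (hφ : ∀ i j, Differentiable ℝ (φ i j)) {d : Fin 6} (hd0 : d ≠ 0)
    (hd2 : d ≠ 2) (a b : Fin 6) (p : Fin 6 → ℝ) :
    pd d (fun q => gSixTwist φ q a b) p =
      pd d (fun q => twistMetric φ ![q 0, q 1, q 2] a b) p -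
        2 * (Pi.single d 1 : Fin 6 → ℝ) 4 * baseGamma a b p := by
  have hΓ := differentiable_baseGamma a b
  simp only [gSixTwist_apply]
  rw [pd_sub _ (differentiable_twistMetric_comp_base hφ a b p) (by fun_prop),
    pd_mul _ (by fun_prop) (hΓ p), pd_mul _ (by fun_prop) (by fun_prop), pd_const, pd_apply,
    pd_eq_zero_of_isInvariantAlong (isInvariantAlong_baseGamma a b hd0 hd2)]
  ring

theorem pd_four_gSixTwist (hφ : ∀ i j, Differentiable ℝ (φ i j)) (a b : Fin 6)
    (p : Fin 6 → ℝ) : pd 4 (fun q => gSixTwist φ q a b) p = -2 * baseGamma a b p := by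
  rw [pd_gSixTwist hφ (by decide) (by decide), pd_eq_zero_of_isInvariantAlong
    (isInvariantAlong_comp_base (fun x => twistMetric φ x a b) (k := 4) (by decide))]
  simp

theorem isInvariantAlong_four_pd_gSixTwist (hφ : ∀ i j, Differentiable ℝ (φ i j)) {d : Fin 6}
    (hd0 : d ≠ 0) (hd2 : d ≠ 2) (a b : Fin 6) :
    IsInvariantAlong (Pi.single 4 1) (pd d (fun q => gSixTwist φ q a b)) := by
  intro u t
  rw [pd_gSixTwist hφ hd0 hd2, pd_gSixTwist hφ hd0 hd2,
    ((isInvariantAlong_comp_base (fun x => twistMetric φ x a b) (k := 4) (by decide)).pd d) u t,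
    isInvariantAlong_baseGamma a b (by decide) (by decide) u t]

end Metric

section ChristoffelSymbols

variable {φ : Fin 3 → Fin 3 → (Fin 3 → ℝ) → ℝ}

theorem christoffel_gSixTwist_of_base {c : Fin 6} (hc : c = 0 ∨ c = 1 ∨ c = 2) (a b : Fin 6)
    (p : Fin 6 → ℝ) :
    christoffel (gSixTwist φ) c a b p = -(1 / 2) * pd (c + 3) (fun q => gSixTwist φ q a b) p :=
  christoffel_eq_of_inv_row (gSixTwist_comm φ)
    (gSixTwist_fibre_row φ (by rcases hc with rfl | rfl | rfl <;> decide))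
    (inv_gSixTwist_base_row p hc) a b

theorem christoffel_gSixTwist_of_null {c : Fin 6} (hc : c = 0 ∨ c = 2) (a b : Fin 6) :
    christoffel (gSixTwist φ) c a b = 0 := by
  funext p
  rw [christoffel_gSixTwist_of_base (by tauto), pd_eq_zero_of_isInvariantAlong
    (fun u t => by rw [isInvariantAlong_gSixTwist (by rcases hc with rfl | rfl <;> decide) u t])]
  simp

theorem christoffel_gSixTwist_one (hφ : ∀ i j, Differentiable ℝ (φ i j)) (a b : Fin 6) :
    christoffel (gSixTwist φ) 1 a b = baseGamma a b := by
  funext p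
  rw [christoffel_gSixTwist_of_base (by decide), show (1 : Fin 6) + 3 = 4 from rfl,
    pd_four_gSixTwist hφ]
  ring

theorem christoffel_gSixTwist_one_eq_zero_of_not_null (hφ : ∀ i j, Differentiable ℝ (φ i j))
    (a b : Fin 6) (ha : ¬ (a = 0 ∨ a = 2)) :
    christoffel (gSixTwist φ) 1 a b = 0 ∧ christoffel (gSixTwist φ) 1 b a = 0 := by
  rw [not_or] at ha
  rw [christoffel_gSixTwist_one hφ, christoffel_gSixTwist_one hφ, baseGamma_comm b,
    baseGamma_eq_zero_of_left ha.1 ha.2]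
  exact ⟨rfl, rfl⟩

theorem pd_christoffel_gSixTwist_one (hφ : ∀ i j, Differentiable ℝ (φ i j)) (m : Fin 6)
    (hm : ¬ (m = 0 ∨ m = 2)) (a b : Fin 6) (p : Fin 6 → ℝ) :
    pd m (christoffel (gSixTwist φ) 1 a b) p = 0 := by
  rw [not_or] at hm
  rw [christoffel_gSixTwist_one hφ]
  exact pd_eq_zero_of_isInvariantAlong (isInvariantAlong_baseGamma a b hm.1 hm.2) p

theorem christoffel_gSixTwist_of_parallel {k : Fin 6} (hk : k = 3 ∨ k = 5) (c b : Fin 6) :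
    christoffel (gSixTwist φ) c k b = 0 ∧ christoffel (gSixTwist φ) c b k = 0 := by
  have hzero := christoffel_eq_zero_of_parallel (gSixTwist_fibre_row φ (by tauto))
    (isInvariantAlong_gSixTwist hk) c b
  exact ⟨hzero, christoffel_comm (gSixTwist_comm φ) c b k ▸ hzero⟩

theorem pd_christoffel_gSixTwist_of_parallel {k : Fin 6} (hk : k = 3 ∨ k = 5) (c a b : Fin 6)
    (p : Fin 6 → ℝ) : pd k (christoffel (gSixTwist φ) c a b) p = 0 :=
  pd_eq_zero_of_isInvariantAlong ((isInvariantAlong_gSixTwist hk).christoffel c a b) p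

theorem christoffel_gSixTwist_four_four (hφ : ∀ i j, Differentiable ℝ (φ i j)) (b : Fin 6) :
    christoffel (gSixTwist φ) 4 4 b = 0 := by
  funext p
  rw [christoffel_eq_sum_of_row_const (gSixTwist_fibre_row φ (by decide))]
  simp [Fin.sum_univ_six, inv_gSixTwist_four, pd_four_gSixTwist hφ, baseGamma]

theorem christoffel_gSixTwist_four_left (hφ : ∀ i j, Differentiable ℝ (φ i j)) {m : Fin 6}
    (hm : ¬ (m = 3 ∨ m = 5)) (k : Fin 6) : christoffel (gSixTwist φ) m 4 k = 0 := by
  fin_cases m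
  · exact christoffel_gSixTwist_of_null (by decide) 4 k
  · exact (christoffel_gSixTwist_one hφ 4 k).trans
      (baseGamma_eq_zero_of_left (by decide) (by decide) k)
  · exact christoffel_gSixTwist_of_null (by decide) 4 k
  · exact absurd (by decide) hm
  · exact christoffel_gSixTwist_four_four hφ k
  · exact absurd (by decide) hm

theorem isInvariantAlong_four_christoffel_gSixTwist_four (hφ : ∀ i j, Differentiable ℝ (φ i j))
    (a b : Fin 6) : IsInvariantAlong (Pi.single 4 1) (christoffel (gSixTwist φ) 4 a b) := by
  intro u t
  have hrow : ∀ x, gSixTwist φ (u + t • Pi.single 4 1) 1 x = gSixTwist φ u 1 x := fun x => by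
    rw [gSixTwist_comm φ _ 1, gSixTwist_comm φ u 1]
    exact isInvariantAlong_four_gSixTwist_apply (by decide) (by decide) u t
  have hcol : ∀ a b d, d ≠ 0 → d ≠ 2 →
      pd a (fun q => gSixTwist φ q b d) (u + t • Pi.single 4 1) =
        pd a (fun q => gSixTwist φ q b d) u :=
    fun a b d hd0 hd2 => (isInvariantAlong_four_gSixTwist_apply hd0 hd2).pd a u t
  have hdiag : ∀ d, d ≠ 0 → d ≠ 2 →
      pd d (fun q => gSixTwist φ q a b) (u + t • Pi.single 4 1) =
        pd d (fun q => gSixTwist φ q a b) u :=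
    fun d hd0 hd2 => isInvariantAlong_four_pd_gSixTwist hφ hd0 hd2 a b u t
  simp [christoffel, Fin.sum_univ_six, inv_gSixTwist_four, hrow, hcol, hdiag]

end ChristoffelSymbols

section SzaboOperator

variable {φ : Fin 3 → Fin 3 → (Fin 3 → ℝ) → ℝ}

theorem covR_gSixTwist_of_null {l : Fin 6} (hl : l = 0 ∨ l = 2) (h i j k : Fin 6)
    (p : Fin 6 → ℝ) : covR (christoffel (gSixTwist φ)) h l i j k p = 0 :=
  covR_eq_zero_of_row_eq_zero (christoffel_gSixTwist_of_null hl) h i j k p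

theorem covR_gSixTwist_of_parallel {i : Fin 6} (hi : i = 3 ∨ i = 5) (h l j k : Fin 6)
    (p : Fin 6 → ℝ) : covR (christoffel (gSixTwist φ)) h l i j k p = 0 :=
  covR_eq_zero_of_parallel (fun c b => (christoffel_gSixTwist_of_parallel hi c b).1)
    (fun c a => (christoffel_gSixTwist_of_parallel hi c a).2)
    (pd_christoffel_gSixTwist_of_parallel hi) h l j k p

theorem curv_gSixTwist_one (hφ : ∀ i j, Differentiable ℝ (φ i j)) {i : Fin 6}
    (hi : ¬ (i = 0 ∨ i = 2)) (j k : Fin 6) : curv (christoffel (gSixTwist φ)) 1 i j k = 0 :=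
  curv_eq_zero_of_supported _ (fun _ hn => christoffel_gSixTwist_of_null hn)
    (christoffel_gSixTwist_one_eq_zero_of_not_null hφ) (pd_christoffel_gSixTwist_one hφ) hi j k

theorem covR_gSixTwist_one (hφ : ∀ i j, Differentiable ℝ (φ i j)) {i : Fin 6}
    (hi : ¬ (i = 0 ∨ i = 2)) (h j k : Fin 6) (p : Fin 6 → ℝ) :
    covR (christoffel (gSixTwist φ)) h 1 i j k p = 0 :=
  covR_eq_zero_of_supported _ (fun _ hn => christoffel_gSixTwist_of_null hn)
    (christoffel_gSixTwist_one_eq_zero_of_not_null hφ) (pd_christoffel_gSixTwist_one hφ) hi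
    h j k p

theorem curv_gSixTwist_four_four (hφ : ∀ i j, Differentiable ℝ (φ i j)) (j k : Fin 6) :
    curv (christoffel (gSixTwist φ)) 4 4 j k = 0 := by
  refine curv_eq_zero_of (christoffel_gSixTwist_four_four hφ) (fun j k =>
      pd_eq_zero_of_isInvariantAlong (isInvariantAlong_four_christoffel_gSixTwist_four hφ j k))
    (fun j m k p => ?_) j k
  by_cases hm : m = 3 ∨ m = 5
  · simp [(christoffel_gSixTwist_of_parallel hm 4 j).2]
  · simp [christoffel_gSixTwist_four_left hφ hm]

theorem covR_gSixTwist_four_four (hφ : ∀ i j, Differentiable ℝ (φ i j)) (h j k : Fin 6)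
    (p : Fin 6 → ℝ) : covR (christoffel (gSixTwist φ)) h 4 4 j k p = 0 := by
  refine covR_eq_zero_of (curv_gSixTwist_four_four hφ) (fun h m => ?_) (fun h m => ?_) h j k
  · by_cases hm : m = 3 ∨ m = 5
    · exact .inl (by simp [(christoffel_gSixTwist_of_parallel hm 4 h).2])
    · refine .inr ?_
      fin_cases m
      · exact curv_eq_zero_of_row_eq_zero (christoffel_gSixTwist_of_null (by decide)) 4
      · exact curv_gSixTwist_one hφ (by decide)
      · exact curv_eq_zero_of_row_eq_zero (christoffel_gSixTwist_of_null (by decide)) 4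
      · exact absurd (by decide) hm
      · exact curv_gSixTwist_four_four hφ
      · exact absurd (by decide) hm
  · by_cases hm : m = 3 ∨ m = 5
    · exact .inr (curv_eq_zero_of_parallel
        (fun c b => (christoffel_gSixTwist_of_parallel hm c b).1)
        (pd_christoffel_gSixTwist_of_parallel hm) 4)
    · refine .inl ?_
      rw [christoffel_comm (gSixTwist_comm φ), christoffel_gSixTwist_four_left hφ hm]
      rfl

theorem szabo_gSixTwist_apply_eq_zero (hφ : ∀ i j, Differentiable ℝ (φ i j)) {l i : Fin 6}
    (hli : l = 0 ∨ l = 2 ∨ i = 3 ∨ i = 5 ∨ (l = 1 ∧ ¬ (i = 0 ∨ i = 2)) ∨ (l = 4 ∧ i = 4))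
    (p X : Fin 6 → ℝ) : szabo (christoffel (gSixTwist φ)) p X l i = 0 := by
  refine szabo_apply_eq_zero_of (fun h j k => ?_) X
  rcases hli with hl | hl | hi | hi | ⟨rfl, hi⟩ | ⟨rfl, rfl⟩
  · exact covR_gSixTwist_of_null (.inl hl) h i j k p
  · exact covR_gSixTwist_of_null (.inr hl) h i j k p
  · exact covR_gSixTwist_of_parallel (.inl hi) h l j k p
  · exact covR_gSixTwist_of_parallel (.inr hi) h l j k p
  · exact covR_gSixTwist_one hφ hi h j k p
  · exact covR_gSixTwist_four_four hφ h j k p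

end SzaboOperator

theorem stmt_15_general (φ : Fin 3 → Fin 3 → (Fin 3 → ℝ) → ℝ)
    (hφsmooth : ∀ i j, ContDiff ℝ (⊤ : ℕ∞) (φ i j)) :
    ∀ (u : Fin 6 → ℝ) (X : Fin 6 → ℝ),
      (szabo (christoffel (gSixTwist φ)) u X).charpoly = Polynomial.X ^ 6 := by
  intro u X
  have hφ : ∀ i j, Differentiable ℝ (φ i j) := fun i j => (hφsmooth i j).differentiable (by simp)
  have hpattern : ∀ l i : Fin 6, ![3, 2, 3, 0, 1, 0] i ≤ ![3, 2, 3, 0, 1, 0] l →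
      l = 0 ∨ l = 2 ∨ i = 3 ∨ i = 5 ∨ (l = 1 ∧ ¬ (i = 0 ∨ i = 2)) ∨ (l = 4 ∧ i = 4) := by
    decide
  exact Matrix.charpoly_eq_X_pow_of_strictlyBlockTriangular ![3, 2, 3, 0, 1, 0]
    fun l i hli => szabo_gSixTwist_apply_eq_zero hφ (hpattern l i hli) u X

/-- for arbitrary smooth symmetric `φᵢⱼ`, the twisted Riemannian extension
metric `gSixTwist φ` on `ℝ⁶` has Szabó operators with characteristic polynomial `λ⁶` at
every point and in every direction: it is a pseudo-Riemannian Szabó metric of signature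
`(3,3)` with only zero eigenvalues. -/
theorem stmt_15 (φ : Fin 3 → Fin 3 → (Fin 3 → ℝ) → ℝ)
    (hφsmooth : ∀ i j, ContDiff ℝ (⊤ : ℕ∞) (φ i j))
    (hφsym : ∀ i j, φ i j = φ j i) :
    ∀ (u : Fin 6 → ℝ) (X : Fin 6 → ℝ),
      (szabo (christoffel (gSixTwist φ)) u X).charpoly = Polynomial.X ^ 6 :=
  stmt_15_general φ hφsmooth
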